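/- Write φ ≣ ψ for: for every alternation flag α ∈ {EA, AE} and every hyperassignment 𝔄, 𝔄 ⊨^α φ iff 𝔄 ⊨^α ψ; and φ ⟹ ψ for: for every α and 𝔄, 𝔄 ⊨^α φ implies 𝔄 ⊨^α ψ. Then for all GFG-QPTL formulas φ, φ₁, φ₂, every p ∈ AP, and every specification ς: (1) φ ≣ ¬¬φ; (2) φ₁∧φ₂ ⟹ φ₁; (3) φ₁ ⟹ φ₁∨φ₂; (4) φ₁∧(φ∧φ₂) ≣ (φ₁∧φ)∧φ₂; (5) φ₁∨(φ∨φ₂) ≣ (φ₁∨φ)∨φ₂; (6) φ₁∧φ₂ ≣ ¬(¬φ₁∨¬φ₂); (7) φ₁∨φ₂ ≣ ¬(¬φ₁∧¬φ₂); (8) ∃p:ς.φ ≣ ¬(∀p:ς.¬φ); (9) ∀p:ς.φ ≣ ¬(∃p:ς.¬φ). (Lemma 5, Boolean Laws.) -/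

import Mathlib

namespace GFG

/-- Temporal valuations. -/
abbrev Val : Type := ℕ → Bool

/-- Assignments over a type `AP` of atomic propositions. -/
abbrev Asg (AP : Type*) : Type _ := AP → Val

section Hyper

variable {X : Type*}

/-- A hyperassignment: a nonempty set of subsets not containing `∅`. -/
def IsHyp (𝔄 : Set (Set X)) : Prop := 𝔄 ≠ ∅ ∧ ∅ ∉ 𝔄

/-- A choice function for `𝔄`. -/
def IsChoice (𝔄 : Set (Set X)) (ϑ : Set X → X) : Prop := ∀ W ∈ 𝔄, ϑ W ∈ W

/-- The dual hyperassignment. -/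
def hdual (𝔄 : Set (Set X)) : Set (Set X) :=
  { Y | ∃ ϑ : Set X → X, IsChoice 𝔄 ϑ ∧ Y = ϑ '' 𝔄 }

/-- The preorder `⊑` on hyperassignments. -/
def hle (𝔄₁ 𝔄₂ : Set (Set X)) : Prop := ∀ W₁ ∈ 𝔄₁, ∃ W₂ ∈ 𝔄₂, W₂ ⊆ W₁

/-- The equivalence `≡` on hyperassignments. -/
def heqv (𝔄₁ 𝔄₂ : Set (Set X)) : Prop := hle 𝔄₁ 𝔄₂ ∧ hle 𝔄₂ 𝔄₁

/-- `par 𝔄`: partitions of `𝔄` into two disjoint parts. -/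
def par (𝔄 : Set (Set X)) : Set (Set (Set X) × Set (Set X)) :=
  { pr | pr.1 ∪ pr.2 = 𝔄 ∧ Disjoint pr.1 pr.2 }

end Hyper

variable {AP : Type*}

/-- `a₁ ≈_p^{>k} a₂`. -/
def ApproxGT (p : AP) (k : ℕ) (a₁ a₂ : Asg AP) : Prop :=
  (∀ q, q ≠ p → a₁ q = a₂ q) ∧ ∀ t ≤ k, a₁ p t = a₂ p t

/-- `a₁ ≈_p^{≥k} a₂`. -/
def ApproxGE (p : AP) (k : ℕ) (a₁ a₂ : Asg AP) : Prop :=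
  (∀ q, q ≠ p → a₁ q = a₂ q) ∧ ∀ t < k, a₁ p t = a₂ p t

/-- Quantifier specifications `ς = (B,S)`. -/
abbrev Spec (AP : Type*) := Set AP × Set AP

/-- A `ς`-functor. -/
def IsSpecFunctor (ς : Spec AP) (F : Asg AP → Val) : Prop :=
  (∀ (k : ℕ) (a₁ a₂ : Asg AP), (∃ p ∈ ς.1, ApproxGT p k a₁ a₂) → F a₁ k = F a₂ k) ∧
  (∀ (k : ℕ) (a₁ a₂ : Asg AP), (∃ p ∈ ς.2, ApproxGE p k a₁ a₂) → F a₁ k = F a₂ k)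

variable [DecidableEq AP]

/-- `ext(a,F,p)`. -/
def extAsg (a : Asg AP) (F : Asg AP → Val) (p : AP) : Asg AP :=
  Function.update a p (F a)

/-- `ext(W,F,p)`. -/
def extSet (W : Set (Asg AP)) (F : Asg AP → Val) (p : AP) : Set (Asg AP) :=
  (fun a => extAsg a F p) '' W

/-- `ext_ς(𝔄,p)`. -/
def extSpec (ς : Spec AP) (𝔄 : Set (Set (Asg AP))) (p : AP) : Set (Set (Asg AP)) :=
  { Y | ∃ W ∈ 𝔄, ∃ F : Asg AP → Val, IsSpecFunctor ς F ∧ Y = extSet W F p }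

/-- Alternation flags. -/
inductive Flag : Type
  | EA : Flag
  | AE : Flag
  deriving DecidableEq

/-- The dual flag. -/
def Flag.dual : Flag → Flag
  | .EA => .AE
  | .AE => .EA

/-- GFG-QPTL formulas (LTL formulas abstracted as arbitrary sets of assignments). -/
inductive Formula (AP : Type*) : Type _ where
  | atom : Set (Asg AP) → Formula AP
  | neg : Formula AP → Formula AP
  | conj : Formula AP → Formula AP → Formula AP
  | disj : Formula AP → Formula AP → Formula AP
  | ex : AP → Spec AP → Formula AP → Formula AP
  | all : AP → Spec AP → Formula AP → Formula AP

/-- The alternating Hodges semantics `𝔄 ⊨^α φ`. -/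
def Sat : Formula AP → Flag → Set (Set (Asg AP)) → Prop
  | .atom Ψ, .EA, 𝔄 => ∃ W ∈ 𝔄, W ⊆ Ψ
  | .atom Ψ, .AE, 𝔄 => ∀ W ∈ 𝔄, W ∩ Ψ ≠ ∅
  | .neg φ, α, 𝔄 => ¬ Sat φ α.dual 𝔄
  | .conj φ₁ φ₂, .EA, 𝔄 =>
      ∀ pr ∈ par 𝔄, (pr.1 ≠ ∅ ∧ Sat φ₁ .EA pr.1) ∨ (pr.2 ≠ ∅ ∧ Sat φ₂ .EA pr.2)
  | .conj φ₁ φ₂, .AE, 𝔄 =>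
      ∀ pr ∈ par (hdual 𝔄), (pr.1 ≠ ∅ ∧ Sat φ₁ .EA pr.1) ∨ (pr.2 ≠ ∅ ∧ Sat φ₂ .EA pr.2)
  | .disj φ₁ φ₂, .AE, 𝔄 =>
      ∃ pr ∈ par 𝔄, (pr.1 ≠ ∅ → Sat φ₁ .AE pr.1) ∧ (pr.2 ≠ ∅ → Sat φ₂ .AE pr.2)
  | .disj φ₁ φ₂, .EA, 𝔄 =>
      ∃ pr ∈ par (hdual 𝔄), (pr.1 ≠ ∅ → Sat φ₁ .AE pr.1) ∧ (pr.2 ≠ ∅ → Sat φ₂ .AE pr.2)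
  | .ex p ς φ, .EA, 𝔄 => Sat φ .EA (extSpec ς 𝔄 p)
  | .ex p ς φ, .AE, 𝔄 => Sat φ .EA (extSpec ς (hdual 𝔄) p)
  | .all p ς φ, .AE, 𝔄 => Sat φ .AE (extSpec ς 𝔄 p)
  | .all p ς φ, .EA, 𝔄 => Sat φ .AE (extSpec ς (hdual 𝔄) p)

/-- `φ ≣ ψ`: equivalence under both alternation flags, over all hyperassignments. -/
def FEquiv (φ ψ : Formula AP) : Prop :=
  ∀ (α : Flag) (𝔄 : Set (Set (Asg AP))), IsHyp 𝔄 → (Sat φ α 𝔄 ↔ Sat ψ α 𝔄)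

/-- `φ ⟹ ψ`: implication under both alternation flags, over all hyperassignments. -/
def FImplies (φ ψ : Formula AP) : Prop :=
  ∀ (α : Flag) (𝔄 : Set (Set (Asg AP))), IsHyp 𝔄 → Sat φ α 𝔄 → Sat ψ α 𝔄

/-!
Double negation and the quantifier dualities hold by unfolding, since negation only swaps the
flag. Conjunction and disjunction are quantifications over splittings `𝔄 = 𝔄₁ ∪ 𝔄₂`, and
nesting two of them amounts to quantifying over splittings into three parts, which gives
associativity; the De Morgan laws are the pointwise De Morgan laws for these quantifiers. The
two weakening laws are immediate for one flag (split `𝔄` as `(𝔄, ∅)`); for the other they need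
the duality `𝔄 ⊨^AE φ ↔ dual(𝔄) ⊨^EA φ`. This is proved by induction on `φ` from two facts:
satisfaction is monotone along `⊑` (upwards for `EA`, downwards for `AE`), and
`dual(dual(𝔄)) ≡ 𝔄`.
-/

section Hyperassignments

variable {X : Type*} {𝔄 𝔅 : Set (Set X)}

theorem exists_isChoice_image_subset [Nonempty X] {S : Set X}
    (h : ∀ W ∈ 𝔄, (W ∩ S).Nonempty) : ∃ ϑ, IsChoice 𝔄 ϑ ∧ ϑ '' 𝔄 ⊆ S := by
  refine ⟨fun W => Classical.epsilon (· ∈ W ∩ S), fun W hW => ?_, ?_⟩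
  · exact (Classical.epsilon_spec (h W hW)).1
  · rintro _ ⟨W, hW, rfl⟩
    exact (Classical.epsilon_spec (h W hW)).2

theorem exists_mem_hdual_subset_iff [Nonempty X] {S : Set X} :
    (∃ Y ∈ hdual 𝔄, Y ⊆ S) ↔ ∀ W ∈ 𝔄, W ∩ S ≠ ∅ := by
  constructor
  · rintro ⟨_, ⟨ϑ, hϑ, rfl⟩, hS⟩ W hW
    exact Set.nonempty_iff_ne_empty.1 ⟨ϑ W, hϑ W hW, hS (Set.mem_image_of_mem ϑ hW)⟩
  · intro h
    obtain ⟨ϑ, hϑ, hS⟩ :=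
      exists_isChoice_image_subset fun W hW => Set.nonempty_iff_ne_empty.2 (h W hW)
    exact ⟨ϑ '' 𝔄, ⟨ϑ, hϑ, rfl⟩, hS⟩

theorem heqv_hdual_hdual [Nonempty X] (𝔄 : Set (Set X)) : heqv (hdual (hdual 𝔄)) 𝔄 := by
  constructor
  · rintro _ ⟨Θ, hΘ, rfl⟩
    by_contra! hc
    -- otherwise a choice function on `𝔄` avoiding `Θ '' hdual 𝔄` yields a member of `hdual 𝔄`
    -- whose `Θ`-value lies both inside and outside that image
    obtain ⟨ϑ, hϑ, hS⟩ := exists_isChoice_image_subset (S := (Θ '' hdual 𝔄)ᶜ) fun W hW =>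
      Set.not_subset.1 (hc W hW)
    have hY : ϑ '' 𝔄 ∈ hdual 𝔄 := ⟨ϑ, hϑ, rfl⟩
    exact hS (hΘ _ hY) (Set.mem_image_of_mem Θ hY)
  · intro W hW
    obtain ⟨Θ, hΘ, hS⟩ := exists_isChoice_image_subset (𝔄 := hdual 𝔄) (S := W) <| by
      rintro _ ⟨ϑ, hϑ, rfl⟩
      exact ⟨ϑ W, Set.mem_image_of_mem ϑ hW, hϑ W hW⟩
    exact ⟨Θ '' hdual 𝔄, ⟨Θ, hΘ, rfl⟩, hS⟩

theorem hle.ne_empty (h : hle 𝔄 𝔅) (h𝔄 : 𝔄 ≠ ∅) : 𝔅 ≠ ∅ := by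
  obtain ⟨W, hW⟩ := Set.nonempty_iff_ne_empty.2 h𝔄
  obtain ⟨W', hW', -⟩ := h W hW
  exact Set.nonempty_iff_ne_empty.1 ⟨W', hW'⟩

theorem hle.exists_selector (h : hle 𝔄 𝔅) : ∃ g : Set X → Set X, ∀ W ∈ 𝔄, g W ∈ 𝔅 ∧ g W ⊆ W :=
  ⟨fun W => Classical.epsilon fun W' => W' ∈ 𝔅 ∧ W' ⊆ W,
    fun W hW => Classical.epsilon_spec (h W hW)⟩

theorem hle.exists_mem_par (h : hle 𝔄 𝔅) {pr : Set (Set X) × Set (Set X)} (hpr : pr ∈ par 𝔅) :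
    ∃ qr ∈ par 𝔄, hle qr.1 pr.1 ∧ hle qr.2 pr.2 := by
  obtain ⟨g, hg⟩ := h.exists_selector
  refine ⟨(𝔄 ∩ g ⁻¹' pr.1, 𝔄 \ g ⁻¹' pr.1),
    ⟨Set.inter_union_sdiff _ _, Set.disjoint_sdiff_inter.symm⟩, ?_, ?_⟩
  · rintro W ⟨hW, hW₁⟩
    exact ⟨g W, hW₁, (hg W hW).2⟩
  · rintro W ⟨hW, hW₁⟩
    have hW₂ : g W ∈ pr.1 ∪ pr.2 := hpr.1 ▸ (hg W hW).1
    exact ⟨g W, hW₂.resolve_left hW₁, (hg W hW).2⟩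

theorem hdual_anti (h : hle 𝔄 𝔅) : hle (hdual 𝔅) (hdual 𝔄) := by
  rintro _ ⟨ϑ, hϑ, rfl⟩
  obtain ⟨g, hg⟩ := h.exists_selector
  refine ⟨(ϑ ∘ g) '' 𝔄, ⟨ϑ ∘ g, fun W hW => (hg W hW).2 (hϑ _ (hg W hW).1), rfl⟩, ?_⟩
  rintro _ ⟨W, hW, rfl⟩
  exact ⟨g W, (hg W hW).1, rfl⟩

end Hyperassignments

section Splittings

variable {X : Type*} {P Q R : Set (Set X) → Prop} {𝔄 𝔅 : Set (Set X)}

def ParForall (P Q : Set (Set X) → Prop) (𝔄 : Set (Set X)) : Prop :=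
  ∀ pr ∈ par 𝔄, (pr.1 ≠ ∅ ∧ P pr.1) ∨ (pr.2 ≠ ∅ ∧ Q pr.2)

def ParExists (P Q : Set (Set X) → Prop) (𝔄 : Set (Set X)) : Prop :=
  ∃ pr ∈ par 𝔄, (pr.1 ≠ ∅ → P pr.1) ∧ (pr.2 ≠ ∅ → Q pr.2)

theorem mem_par_self (𝔄 : Set (Set X)) : (𝔄, ∅) ∈ par 𝔄 :=
  ⟨Set.union_empty 𝔄, Set.disjoint_empty 𝔄⟩

theorem swap_mem_par {pr : Set (Set X) × Set (Set X)} (h : pr ∈ par 𝔄) : pr.swap ∈ par 𝔄 :=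
  ⟨(Set.union_comm _ _).trans h.1, h.2.symm⟩

theorem parExists_iff_not_parForall :
    ParExists P Q 𝔄 ↔ ¬ ParForall (fun 𝔅 => ¬ P 𝔅) (fun 𝔅 => ¬ Q 𝔅) 𝔄 := by
  simp only [ParExists, ParForall, not_forall, not_or, not_and, not_not, exists_prop]

theorem parForall_iff_not_parExists :
    ParForall P Q 𝔄 ↔ ¬ ParExists (fun 𝔅 => ¬ P 𝔅) (fun 𝔅 => ¬ Q 𝔅) 𝔄 := by
  simp only [parExists_iff_not_parForall, not_not]

theorem ParForall.left (h : ParForall P Q 𝔄) : P 𝔄 := by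
  rcases h _ (mem_par_self 𝔄) with ⟨-, hP⟩ | ⟨hne, -⟩
  exacts [hP, absurd rfl hne]

theorem ParExists.inl (h : P 𝔄) : ParExists P Q 𝔄 :=
  ⟨_, mem_par_self 𝔄, fun _ => h, fun hne => absurd rfl hne⟩

theorem ParForall.ne_empty (h : ParForall P Q 𝔄) : 𝔄 ≠ ∅ := by
  rintro rfl
  rcases h _ (mem_par_self ∅) with ⟨hne, -⟩ | ⟨hne, -⟩ <;> exact hne rfl

theorem ParForall.mono (hP : ∀ ⦃𝔄 𝔅⦄, hle 𝔄 𝔅 → P 𝔄 → P 𝔅)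
    (hQ : ∀ ⦃𝔄 𝔅⦄, hle 𝔄 𝔅 → Q 𝔄 → Q 𝔅) (h𝔄𝔅 : hle 𝔄 𝔅) (h : ParForall P Q 𝔄) :
    ParForall P Q 𝔅 := by
  intro pr hpr
  obtain ⟨qr, hqr, h₁, h₂⟩ := h𝔄𝔅.exists_mem_par hpr
  rcases h qr hqr with ⟨hne, hq⟩ | ⟨hne, hq⟩
  exacts [Or.inl ⟨h₁.ne_empty hne, hP h₁ hq⟩, Or.inr ⟨h₂.ne_empty hne, hQ h₂ hq⟩]

theorem ParExists.anti (hP : ∀ ⦃𝔄 𝔅⦄, hle 𝔄 𝔅 → P 𝔅 → P 𝔄)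
    (hQ : ∀ ⦃𝔄 𝔅⦄, hle 𝔄 𝔅 → Q 𝔅 → Q 𝔄) (h𝔄𝔅 : hle 𝔄 𝔅) (h : ParExists P Q 𝔅) :
    ParExists P Q 𝔄 := by
  rw [parExists_iff_not_parForall] at h ⊢
  exact mt (ParForall.mono (fun _ _ h => mt (hP h)) (fun _ _ h => mt (hQ h)) h𝔄𝔅) h

theorem parForall_comm : ParForall P Q 𝔄 ↔ ParForall Q P 𝔄 := by
  have key {P Q} (h : ParForall P Q 𝔄) : ParForall Q P 𝔄 := fun pr hpr =>
    (h pr.swap (swap_mem_par hpr)).symm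
  exact ⟨key, key⟩

theorem parForall_parForall_iff :
    ParForall P (ParForall Q R) 𝔄 ↔
      ∀ u v w, u ∪ (v ∪ w) = 𝔄 → Disjoint u v → Disjoint u w → Disjoint v w →
        (u ≠ ∅ ∧ P u) ∨ (v ≠ ∅ ∧ Q v) ∨ (w ≠ ∅ ∧ R w) := by
  constructor
  · intro h u v w huvw huv huw hvw
    rcases h (u, v ∪ w) ⟨huvw, Set.disjoint_union_right.2 ⟨huv, huw⟩⟩ with hu | ⟨-, hvw'⟩
    · exact Or.inl hu
    · exact Or.inr (hvw' (v, w) ⟨rfl, hvw⟩)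
  · rintro h ⟨u, s⟩ ⟨hus, hdisj⟩
    by_cases hu : u ≠ ∅ ∧ P u
    · exact Or.inl hu
    have hs : ParForall Q R s := by
      rintro ⟨v, w⟩ ⟨rfl, hvw⟩
      exact (h u v w hus (hdisj.mono_right Set.subset_union_left)
        (hdisj.mono_right Set.subset_union_right) hvw).resolve_left hu
    exact Or.inr ⟨hs.ne_empty, hs⟩

theorem parForall_assoc : ParForall P (ParForall Q R) 𝔄 ↔ ParForall (ParForall P Q) R 𝔄 := by
  -- after commuting the outer clause, both sides are three-part forms with the parts rotated
  rw [parForall_comm (P := ParForall P Q), parForall_parForall_iff, parForall_parForall_iff]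
  constructor
  · intro h u v w huvw huv huw hvw
    have := h v w u (by rw [← huvw]; ac_rfl) hvw huv.symm huw.symm
    tauto
  · intro h u v w huvw huv huw hvw
    have := h w u v (by rw [← huvw]; ac_rfl) huw.symm hvw.symm huv
    tauto

theorem parExists_assoc : ParExists P (ParExists Q R) 𝔄 ↔ ParExists (ParExists P Q) R 𝔄 := by
  simp only [parExists_iff_not_parForall, not_not]
  exact not_congr parForall_assoc

end Splittings

section Semantics

theorem sat_conj_EA {φ₁ φ₂ : Formula AP} {𝔄 : Set (Set (Asg AP))} :
    Sat (.conj φ₁ φ₂) .EA 𝔄 ↔ ParForall (Sat φ₁ .EA) (Sat φ₂ .EA) 𝔄 := Iff.rfl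

theorem sat_conj_AE {φ₁ φ₂ : Formula AP} {𝔄 : Set (Set (Asg AP))} :
    Sat (.conj φ₁ φ₂) .AE 𝔄 ↔ ParForall (Sat φ₁ .EA) (Sat φ₂ .EA) (hdual 𝔄) := Iff.rfl

theorem sat_disj_AE {φ₁ φ₂ : Formula AP} {𝔄 : Set (Set (Asg AP))} :
    Sat (.disj φ₁ φ₂) .AE 𝔄 ↔ ParExists (Sat φ₁ .AE) (Sat φ₂ .AE) 𝔄 := Iff.rfl

theorem sat_disj_EA {φ₁ φ₂ : Formula AP} {𝔄 : Set (Set (Asg AP))} :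
    Sat (.disj φ₁ φ₂) .EA 𝔄 ↔ ParExists (Sat φ₁ .AE) (Sat φ₂ .AE) (hdual 𝔄) := Iff.rfl

variable {φ φ₁ φ₂ : Formula AP} {p : AP} {ς : Spec AP} {α : Flag} {𝔄 𝔅 : Set (Set (Asg AP))}

theorem extSpec_mono (h : hle 𝔄 𝔅) : hle (extSpec ς 𝔄 p) (extSpec ς 𝔅 p) := by
  rintro _ ⟨W, hW, F, hF, rfl⟩
  obtain ⟨W', hW', hsub⟩ := h W hW
  exact ⟨extSet W' F p, ⟨W', hW', F, hF, rfl⟩, Set.image_mono hsub⟩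

theorem sat_mono (φ : Formula AP) (h : hle 𝔄 𝔅) :
    (Sat φ .EA 𝔄 → Sat φ .EA 𝔅) ∧ (Sat φ .AE 𝔅 → Sat φ .AE 𝔄) := by
  induction φ generalizing 𝔄 𝔅 with
  | atom Ψ =>
    constructor
    · rintro ⟨W, hW, hΨ⟩
      obtain ⟨W', hW', hsub⟩ := h W hW
      exact ⟨W', hW', hsub.trans hΨ⟩
    · intro hs W hW hempty
      obtain ⟨W', hW', hsub⟩ := h W hW
      exact hs W' hW' (Set.subset_empty_iff.1 (hempty ▸ Set.inter_subset_inter_left Ψ hsub))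
  | neg φ ih => exact ⟨mt (ih h).2, mt (ih h).1⟩
  | conj φ₁ φ₂ ih₁ ih₂ =>
    have mono₁ : ∀ ⦃𝔄 𝔅⦄, hle 𝔄 𝔅 → Sat φ₁ .EA 𝔄 → Sat φ₁ .EA 𝔅 := fun _ _ h => (ih₁ h).1
    have mono₂ : ∀ ⦃𝔄 𝔅⦄, hle 𝔄 𝔅 → Sat φ₂ .EA 𝔄 → Sat φ₂ .EA 𝔅 := fun _ _ h => (ih₂ h).1
    simp only [sat_conj_EA, sat_conj_AE]
    exact ⟨ParForall.mono mono₁ mono₂ h, ParForall.mono mono₁ mono₂ (hdual_anti h)⟩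
  | disj φ₁ φ₂ ih₁ ih₂ =>
    have anti₁ : ∀ ⦃𝔄 𝔅⦄, hle 𝔄 𝔅 → Sat φ₁ .AE 𝔅 → Sat φ₁ .AE 𝔄 := fun _ _ h => (ih₁ h).2
    have anti₂ : ∀ ⦃𝔄 𝔅⦄, hle 𝔄 𝔅 → Sat φ₂ .AE 𝔅 → Sat φ₂ .AE 𝔄 := fun _ _ h => (ih₂ h).2
    simp only [sat_disj_EA, sat_disj_AE]
    exact ⟨ParExists.anti anti₁ anti₂ (hdual_anti h), ParExists.anti anti₁ anti₂ h⟩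
  | ex p ς φ ih => exact ⟨(ih (extSpec_mono h)).1, (ih (extSpec_mono (hdual_anti h))).1⟩
  | all p ς φ ih => exact ⟨(ih (extSpec_mono (hdual_anti h))).2, (ih (extSpec_mono h)).2⟩

theorem sat_congr (φ : Formula AP) (h : heqv 𝔄 𝔅) : ∀ α, Sat φ α 𝔄 ↔ Sat φ α 𝔅
  | .EA => ⟨(sat_mono φ h.1).1, (sat_mono φ h.2).1⟩
  | .AE => ⟨(sat_mono φ h.2).2, (sat_mono φ h.1).2⟩

theorem sat_EA_iff_of_sat_AE_iff (h : ∀ 𝔄, Sat φ .AE 𝔄 ↔ Sat φ .EA (hdual 𝔄))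
    (𝔄 : Set (Set (Asg AP))) :
    Sat φ .EA 𝔄 ↔ Sat φ .AE (hdual 𝔄) :=
  (sat_congr φ (heqv_hdual_hdual 𝔄) .EA).symm.trans (h (hdual 𝔄)).symm

theorem sat_AE_iff_sat_EA_hdual (φ : Formula AP) (𝔄 : Set (Set (Asg AP))) :
    Sat φ .AE 𝔄 ↔ Sat φ .EA (hdual 𝔄) := by
  induction φ generalizing 𝔄 with
  | atom Ψ => exact exists_mem_hdual_subset_iff.symm
  | neg φ ih => exact not_congr (sat_EA_iff_of_sat_AE_iff ih 𝔄)
  | conj φ₁ φ₂ => rfl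
  | disj φ₁ φ₂ => exact (sat_congr (.disj φ₁ φ₂) (heqv_hdual_hdual 𝔄) .AE).symm
  | ex p ς φ => rfl
  | all p ς φ =>
    have h := heqv_hdual_hdual 𝔄
    exact (sat_congr φ ⟨extSpec_mono (ς := ς) (p := p) h.1, extSpec_mono h.2⟩ .AE).symm

theorem sat_EA_iff_sat_AE_hdual (φ : Formula AP) (𝔄 : Set (Set (Asg AP))) :
    Sat φ .EA 𝔄 ↔ Sat φ .AE (hdual 𝔄) :=
  sat_EA_iff_of_sat_AE_iff (sat_AE_iff_sat_EA_hdual φ) 𝔄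

theorem sat_neg_neg : Sat (.neg (.neg φ)) α 𝔄 ↔ Sat φ α 𝔄 := by
  cases α <;> exact not_not

theorem sat_conj_left (h : Sat (.conj φ₁ φ₂) α 𝔄) : Sat φ₁ α 𝔄 := by
  cases α
  · exact (sat_conj_EA.1 h).left
  · exact (sat_AE_iff_sat_EA_hdual φ₁ 𝔄).2 (sat_conj_AE.1 h).left

theorem sat_disj_inl (h : Sat φ₁ α 𝔄) : Sat (.disj φ₁ φ₂) α 𝔄 := by
  cases α
  · exact sat_disj_EA.2 (.inl ((sat_EA_iff_sat_AE_hdual φ₁ 𝔄).1 h))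
  · exact sat_disj_AE.2 (.inl h)

theorem sat_conj_assoc {φ₃ : Formula AP} :
    Sat (.conj φ₁ (.conj φ₂ φ₃)) α 𝔄 ↔ Sat (.conj (.conj φ₁ φ₂) φ₃) α 𝔄 := by
  cases α <;> exact parForall_assoc

theorem sat_disj_assoc {φ₃ : Formula AP} :
    Sat (.disj φ₁ (.disj φ₂ φ₃)) α 𝔄 ↔ Sat (.disj (.disj φ₁ φ₂) φ₃) α 𝔄 := by
  cases α <;> exact parExists_assoc

theorem sat_conj_iff_neg_disj_neg :
    Sat (.conj φ₁ φ₂) α 𝔄 ↔ Sat (.neg (.disj (.neg φ₁) (.neg φ₂))) α 𝔄 := by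
  cases α <;> exact parForall_iff_not_parExists

theorem sat_disj_iff_neg_conj_neg :
    Sat (.disj φ₁ φ₂) α 𝔄 ↔ Sat (.neg (.conj (.neg φ₁) (.neg φ₂))) α 𝔄 := by
  cases α <;> exact parExists_iff_not_parForall

theorem sat_ex_iff_neg_all_neg : Sat (.ex p ς φ) α 𝔄 ↔ Sat (.neg (.all p ς (.neg φ))) α 𝔄 := by
  cases α <;> exact not_not.symm

theorem sat_all_iff_neg_ex_neg : Sat (.all p ς φ) α 𝔄 ↔ Sat (.neg (.ex p ς (.neg φ))) α 𝔄 := by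
  cases α <;> exact not_not.symm

end Semantics

/-- Lemma 5 (Boolean Laws). -/
theorem boolean_laws (φ φ₁ φ₂ : Formula AP) (p : AP) (ς : Spec AP) :
    FEquiv φ (.neg (.neg φ)) ∧
    FImplies (.conj φ₁ φ₂) φ₁ ∧
    FImplies φ₁ (.disj φ₁ φ₂) ∧
    FEquiv (.conj φ₁ (.conj φ φ₂)) (.conj (.conj φ₁ φ) φ₂) ∧
    FEquiv (.disj φ₁ (.disj φ φ₂)) (.disj (.disj φ₁ φ) φ₂) ∧
    FEquiv (.conj φ₁ φ₂) (.neg (.disj (.neg φ₁) (.neg φ₂))) ∧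
    FEquiv (.disj φ₁ φ₂) (.neg (.conj (.neg φ₁) (.neg φ₂))) ∧
    FEquiv (.ex p ς φ) (.neg (.all p ς (.neg φ))) ∧
    FEquiv (.all p ς φ) (.neg (.ex p ς (.neg φ))) :=
  ⟨fun _ _ _ => sat_neg_neg.symm, fun _ _ _ => sat_conj_left, fun _ _ _ => sat_disj_inl,
    fun _ _ _ => sat_conj_assoc, fun _ _ _ => sat_disj_assoc,
    fun _ _ _ => sat_conj_iff_neg_disj_neg, fun _ _ _ => sat_disj_iff_neg_conj_neg,
    fun _ _ _ => sat_ex_iff_neg_all_neg, fun _ _ _ => sat_all_iff_neg_ex_neg⟩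

end GFG
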